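/- arXiv:2012.06797 — 2 statements merged into one kernel-verified Lean document; each statement's English description precedes it below -/
import Mathlib

section
/- Discrete Green-type bound (unstable part): Under the discrete dichotomy assumption with adapted norm bound |𝒜(n,m)P²_m x|_n ≤ D(μ_m/μ_n)^{-λ}ν_m^d|x| for n ≤ m, if |g_m| ≤ δ(μ_{m+1}^λ − μ_m^λ)/(μ_{m+1}^λ ν_m^d) for all m, then for every n, |∑_{m=n}^{∞} 𝒜(n,m)P²_m g_m|_n ≤ Dδ. -/
/-!
Apply the adapted-norm bound termwise: the hypothesis on `g` is tailored so that the `m`-th term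
has adapted norm at most `Dδ μ_n^λ (μ_m^{-λ} - μ_{m+1}^{-λ})`. These bounds telescope to
`Dδ μ_n^λ μ_n^{-λ} = Dδ`, and a continuous linear map applied to a series is bounded by any
summable majorant of the norms of its terms.
-/

open Filter

theorem sum_range_sub_succ_le_of_nonneg {u : ℕ → ℝ} (hu0 : ∀ m, 0 ≤ u m) (N : ℕ) :
    ∑ m ∈ Finset.range N, (u m - u (m + 1)) ≤ u 0 := by
  rw [Finset.sum_range_sub' u N]
  linarith [hu0 N]

theorem Antitone.summable_sub_succ {u : ℕ → ℝ} (hu : Antitone u) (hu0 : ∀ m, 0 ≤ u m) :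
    Summable fun m => u m - u (m + 1) :=
  summable_of_sum_range_le (fun m => sub_nonneg.2 (hu m.le_succ))
    (sum_range_sub_succ_le_of_nonneg hu0)

theorem Antitone.tsum_sub_succ_le {u : ℕ → ℝ} (hu : Antitone u) (hu0 : ∀ m, 0 ≤ u m) :
    ∑' m, (u m - u (m + 1)) ≤ u 0 :=
  Real.tsum_le_of_sum_range_le (fun m => sub_nonneg.2 (hu m.le_succ))
    (sum_range_sub_succ_le_of_nonneg hu0)

/-- `f` need not be summable: otherwise its sum is `0`. -/
theorem ContinuousLinearMap.norm_map_tsum_le {R E F ι : Type*} [Semiring R]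
    [SeminormedAddCommGroup E] [T2Space E] [Module R E] [NormedAddCommGroup F] [Module R F]
    (L : E →L[R] F) {f : ι → E} {b : ι → ℝ} (hb : Summable b)
    (hLf : ∀ i, ‖L (f i)‖ ≤ b i) :
    ‖L (∑' i, f i)‖ ≤ ∑' i, b i := by
  by_cases hf : Summable f
  · rw [L.map_tsum hf]
    exact tsum_of_norm_bounded hb.hasSum hLf
  · rw [tsum_eq_zero_of_not_summable hf, map_zero, norm_zero]
    exact tsum_nonneg fun i => (norm_nonneg _).trans (hLf i)

theorem ContinuousLinearMap.norm_map_tsum_mul_le {R E F ι : Type*} [Semiring R]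
    [SeminormedAddCommGroup E] [T2Space E] [Module R E] [NormedAddCommGroup F] [Module R F]
    (L : E →L[R] F) {f : ι → E} {b : ι → ℝ} {c : ℝ} (hc : 0 < c) (hb : Summable b)
    (hLf : ∀ i, ‖L (f i)‖ * c ≤ b i) :
    ‖L (∑' i, f i)‖ * c ≤ ∑' i, b i := by
  rw [← le_div_iff₀ hc, ← tsum_div_const]
  exact L.norm_map_tsum_le (hb.div_const c) fun i => (le_div_iff₀ hc).2 (hLf i)

/-- Applied with `p = μ_n`, `q = μ_m`, `r = μ_{m+1}`, `v = ν_m`, `x = ‖g_m‖`. -/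
theorem mul_rpow_neg_mul_le_mul_sub_inv {D δ lam d p q r v x : ℝ} (hD : 0 ≤ D) (hp : 0 < p)
    (hq : 0 < q) (hr : 0 < r) (hv : 0 < v)
    (hx : x ≤ δ * ((r ^ lam - q ^ lam) / (r ^ lam * v ^ d))) :
    D * (q / p) ^ (-lam) * v ^ d * x ≤ D * δ * p ^ lam * ((q ^ lam)⁻¹ - (r ^ lam)⁻¹) := by
  have hpl := Real.rpow_pos_of_pos hp lam
  have hql := Real.rpow_pos_of_pos hq lam
  have hrl := Real.rpow_pos_of_pos hr lam
  have hvd := Real.rpow_pos_of_pos hv d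
  have hratio : (q / p) ^ (-lam) = p ^ lam / q ^ lam := by
    rw [Real.rpow_neg (div_pos hq hp).le, Real.div_rpow hq.le hp.le, inv_div]
  calc D * (q / p) ^ (-lam) * v ^ d * x
      ≤ D * (p ^ lam / q ^ lam) * v ^ d * (δ * ((r ^ lam - q ^ lam) / (r ^ lam * v ^ d))) := by
        rw [hratio]; gcongr
    _ = D * δ * p ^ lam * ((q ^ lam)⁻¹ - (r ^ lam)⁻¹) := by
        field_simp

theorem discrete_green_bound_unstable_general
    {X : Type*} [NormedAddCommGroup X] [NormedSpace ℝ X]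
    (𝒜 : ℕ → ℕ → X →L[ℝ] X) (P2 : ℕ → X →L[ℝ] X)
    (μ ν : ℕ → ℝ) (g : ℕ → X) (D lam d δ : ℝ)
    (hD : 0 < D) (hlam : 0 < lam) (hδ : 0 < δ)
    (hμmono : StrictMono μ) (hμ0 : 1 ≤ μ 0)
    (hν : ∀ n, 1 ≤ ν n)
    (hAdapt : ∀ n m, n ≤ m → ∀ x : X,
      (⨆ k : Set.Iic n, ‖𝒜 (↑k) n (𝒜 n m (P2 m x))‖ * (μ n / μ (↑k)) ^ lam)
        ≤ D * (μ m / μ n) ^ (-lam) * (ν m) ^ d * ‖x‖)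
    (hg : ∀ m, ‖g m‖ ≤ δ * (((μ (m + 1)) ^ lam - (μ m) ^ lam) /
      ((μ (m + 1)) ^ lam * (ν m) ^ d))) :
    ∀ n : ℕ,
      (⨆ k : Set.Iic n,
          ‖𝒜 (↑k) n (∑' m : ℕ, 𝒜 n (n + m) (P2 (n + m) (g (n + m))))‖ *
            (μ n / μ (↑k)) ^ lam)
        ≤ D * δ := by
  intro n
  have hμpos m : 0 < μ m := one_pos.trans_le (hμ0.trans (hμmono.monotone m.zero_le))
  set u : ℕ → ℝ := fun m => (μ (n + m) ^ lam)⁻¹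
  have hu : Antitone u := fun i j hij =>
    inv_anti₀ (Real.rpow_pos_of_pos (hμpos _) _)
      (Real.rpow_le_rpow (hμpos _).le (hμmono.monotone (by omega)) hlam.le)
  have hu0 m : 0 ≤ u m := inv_nonneg.2 (Real.rpow_nonneg (hμpos _).le _)
  have hterm (k : Set.Iic n) (m : ℕ) :
      ‖𝒜 k n (𝒜 n (n + m) (P2 (n + m) (g (n + m))))‖ * (μ n / μ k) ^ lam
        ≤ D * δ * μ n ^ lam * (u m - u (m + 1)) :=
    calc _ ≤ ⨆ k' : Set.Iic n,
            ‖𝒜 k' n (𝒜 n (n + m) (P2 (n + m) (g (n + m))))‖ * (μ n / μ k') ^ lam :=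
          le_ciSup (Set.finite_range _).bddAbove k
      _ ≤ _ := hAdapt n (n + m) (n.le_add_right m) _
      _ ≤ _ := mul_rpow_neg_mul_le_mul_sub_inv hD.le (hμpos _) (hμpos _) (hμpos _)
          (one_pos.trans_le (hν _)) (hg _)
  have htel : ∑' m, D * δ * μ n ^ lam * (u m - u (m + 1)) ≤ D * δ := by
    rw [tsum_mul_left]
    calc _ ≤ D * δ * μ n ^ lam * u 0 :=
          mul_le_mul_of_nonneg_left (hu.tsum_sub_succ_le hu0)
            (mul_nonneg (mul_nonneg hD.le hδ.le) (Real.rpow_nonneg (hμpos n).le _))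
      _ = D * δ := by
          simp only [u, add_zero]
          field_simp [(Real.rpow_pos_of_pos (hμpos n) lam).ne']
  refine ciSup_le fun k => ?_
  have hweight : 0 < (μ n / μ k) ^ lam := Real.rpow_pos_of_pos (div_pos (hμpos _) (hμpos _)) _
  exact ((𝒜 k n).norm_map_tsum_mul_le hweight
    ((hu.summable_sub_succ hu0).mul_left _) (hterm k)).trans htel

/-- Discrete Green-type bound for the unstable part, in the adapted norm
`|x|_n = ⨆_{k ≤ n} ‖𝒜(k,n)x‖ (μ_n/μ_k)^λ`. -/
theorem discrete_green_bound_unstable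
    {X : Type*} [NormedAddCommGroup X] [NormedSpace ℝ X] [CompleteSpace X]
    (𝒜 : ℕ → ℕ → X →L[ℝ] X) (P2 : ℕ → X →L[ℝ] X)
    (μ ν : ℕ → ℝ) (g : ℕ → X) (D lam d δ : ℝ)
    (hD : 0 < D) (hlam : 0 < lam) (hd : 0 ≤ d) (hδ : 0 < δ)
    (hμmono : StrictMono μ) (hμ0 : 1 ≤ μ 0) (hμtop : Tendsto μ atTop atTop)
    (hν : ∀ n, 1 ≤ ν n)
    (hcoc : ∀ k n m, k ≤ n → n ≤ m → (𝒜 k n).comp (𝒜 n m) = 𝒜 k m)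
    (hAdapt : ∀ n m, n ≤ m → ∀ x : X,
      (⨆ k : Set.Iic n, ‖𝒜 (↑k) n (𝒜 n m (P2 m x))‖ * (μ n / μ (↑k)) ^ lam)
        ≤ D * (μ m / μ n) ^ (-lam) * (ν m) ^ d * ‖x‖)
    (hg : ∀ m, ‖g m‖ ≤ δ * (((μ (m + 1)) ^ lam - (μ m) ^ lam) /
      ((μ (m + 1)) ^ lam * (ν m) ^ d))) :
    ∀ n : ℕ,
      (⨆ k : Set.Iic n,
          ‖𝒜 (↑k) n (∑' m : ℕ, 𝒜 n (n + m) (P2 (n + m) (g (n + m))))‖ *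
            (μ n / μ (↑k)) ^ lam)
        ≤ D * δ :=
  discrete_green_bound_unstable_general 𝒜 P2 μ ν g D lam d δ hD hlam hδ hμmono hμ0 hν hAdapt hg
end

section
/- Continuous-time shadowing corollary: Let x' = A(t)x admit a (μ,ν)-dichotomy on [0,∞) with projections P¹(t)+P²(t)=I (no center direction), constants D, λ > 0, d ≥ 0, where μ is strictly increasing differentiable with μ(0)=1, μ(t)→∞, ν(t) ≥ 1. Suppose f: [0,∞)×X → X is continuous with |f(t,x) − f(t,y)| ≤ (cμ'(t)/(μ(t)ν(t)^d))|x − y| and q := c(2D+1) + 2cD/λ < 1. Then there is C > 0 such that for each δ > 0 and each differentiable y: [0,∞)→X with |y'(t) − A(t)y(t) − f(t,y(t))| ≤ δμ'(t)/(μ(t)ν(t)^d) for all t ≥ 0, there exists a solution x of x' = A(t)x + f(t,x) with sup_{t≥0} |x(t) − y(t)| ≤ Cδ. -/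
open Filter Set Topology MeasureTheory
open scoped BoundedContinuousFunction

/-!
The shadowing solution is `y + e`, where `e` is the fixed point of the Lyapunov–Perron operator
`e ↦ ∫_{(0,t]} T(t,s) P¹(s) u_e(s) ds - ∫_{(t,∞)} T(t,s) P²(s) u_e(s) ds` with
`u_e = f(·, y + e) - (y' - A y)`. The dichotomy turns a forcing term bounded by `K μ'/(μ ν^d)`
into a function bounded by `2DK/λ`, because against the kernels `(μ(s)/μ(t))^{±λ}` the weight
`μ'/μ` integrates to at most `1/λ`. Hence the operator is a `2cD/λ`-contraction on bounded
continuous functions and its fixed point has norm at most `(2Dδ/λ)/(1 - 2cD/λ)`. Writing `y` by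
variation of constants shows that `y + e` solves the integral equation of `x' = A x + f(t, x)`,
and a mild solution with continuous forcing is a classical one.
-/

section StrongOperatorLimits

variable {α E F : Type*} [NormedAddCommGroup E] [NormedSpace ℝ E]
  [NormedAddCommGroup F] [NormedSpace ℝ F]

theorem tendsto_clm_apply_of_norm_le {l : Filter α} {L : α → E →L[ℝ] F} {L₀ : E →L[ℝ] F}
    {q : α → E} {q₀ : E} {C : ℝ} (hL : ∀ᶠ a in l, ‖L a‖ ≤ C)
    (hLq₀ : Tendsto (fun a => L a q₀) l (𝓝 (L₀ q₀))) (hq : Tendsto q l (𝓝 q₀)) :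
    Tendsto (fun a => L a (q a)) l (𝓝 (L₀ q₀)) := by
  have hsmall : Tendsto (fun a => L a (q a - q₀)) l (𝓝 0) := by
    refine squeeze_zero_norm' ?_
      (by simpa using (tendsto_sub_nhds_zero_iff.2 hq).norm.const_mul C)
    filter_upwards [hL] with a ha using (L a).le_of_opNorm_le ha _
  simpa using hsmall.add hLq₀

theorem hasDerivWithinAt_clm_apply_of_norm_le {L : ℝ → E →L[ℝ] F} {ρ : ℝ → E} {s : Set ℝ}
    {t₀ C : ℝ} {L' : F} {ρ' : E} (hL : ∀ᶠ t in 𝓝[s] t₀, ‖L t‖ ≤ C)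
    (hLρ : HasDerivWithinAt (fun t => L t (ρ t₀)) L' s t₀)
    (hLρ' : ContinuousWithinAt (fun t => L t ρ') s t₀) (hρ : HasDerivWithinAt ρ ρ' s t₀) :
    HasDerivWithinAt (fun t => L t (ρ t)) (L t₀ ρ' + L') s t₀ := by
  rw [hasDerivWithinAt_iff_tendsto_slope] at hLρ hρ ⊢
  have hle : 𝓝[s \ {t₀}] t₀ ≤ 𝓝[s] t₀ := nhdsWithin_mono _ sdiff_subset
  refine ((tendsto_clm_apply_of_norm_le (hL.filter_mono hle) (hLρ'.tendsto.mono_left hle)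
    hρ).add hLρ).congr fun t => ?_
  simp only [slope_def_module, map_smul, map_sub, ← smul_add]
  abel_nf

theorem ContinuousLinearMap.norm_apply_le_of_le_mul_of_le_div {L : E →L[ℝ] F} {w : E}
    {a n K m M : ℝ} (hL : ‖L‖ ≤ a * n) (hn : 0 < n) (hw : ‖w‖ ≤ K * m / (M * n)) :
    ‖L w‖ ≤ a * K * (m / M) :=
  calc ‖L w‖ ≤ ‖L‖ * ‖w‖ := L.le_opNorm w
    _ ≤ a * n * (K * m / (M * n)) :=
        mul_le_mul hL hw (norm_nonneg _) ((norm_nonneg _).trans hL)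
    _ = a * K * (m / M) := by field_simp

end StrongOperatorLimits

section RealFunctions

variable {E : Type*} [NormedAddCommGroup E] [NormedSpace ℝ E]

theorem norm_le_exp_mul_norm_of_norm_deriv_le {g g' : ℝ → E} {K a b : ℝ} (hab : a ≤ b)
    (hg : ∀ t ∈ Icc a b, HasDerivAt g (g' t) t) (hK : ∀ t ∈ Icc a b, ‖g' t‖ ≤ K * ‖g t‖) :
    ‖g b‖ ≤ Real.exp (K * (b - a)) * ‖g a‖ := by
  have := norm_le_gronwallBound_of_norm_deriv_right_le (ε := 0)
    (fun t ht => (hg t ht).continuousAt.continuousWithinAt)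
    (fun t ht => (hg t (Ico_subset_Icc_self ht)).hasDerivWithinAt) le_rfl
    (fun t ht => by simpa using hK t (Ico_subset_Icc_self ht)) b ⟨hab, le_rfl⟩
  rwa [gronwallBound_ε0, mul_comm] at this

theorem norm_le_exp_mul_abs_of_norm_deriv_le {g g' : ℝ → E} {K a b : ℝ}
    (hg : ∀ t ∈ uIcc a b, HasDerivAt g (g' t) t) (hK : ∀ t ∈ uIcc a b, ‖g' t‖ ≤ K * ‖g t‖) :
    ‖g b‖ ≤ Real.exp (K * |b - a|) * ‖g a‖ := by
  rcases le_total a b with hab | hba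
  · rw [uIcc_of_le hab] at hg hK
    rw [abs_of_nonneg (sub_nonneg.2 hab)]
    exact norm_le_exp_mul_norm_of_norm_deriv_le hab hg hK
  · rw [uIcc_of_ge hba] at hg hK
    have hmem : ∀ t ∈ Icc (-a) (-b), -t ∈ Icc b a := fun t ht =>
      ⟨by linarith [ht.2], by linarith [ht.1]⟩
    have := norm_le_exp_mul_norm_of_norm_deriv_le (g := fun t => g (-t))
      (g' := fun t => -g' (-t)) (neg_le_neg hba)
      (fun t ht => by
        simpa [Function.comp_def] using (hg (-t) (hmem t ht)).scomp t (hasDerivAt_neg t))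
      (fun t ht => by simpa using hK (-t) (hmem t ht))
    rw [abs_of_nonpos (sub_nonpos.2 hba)]
    simpa [neg_sub, sub_eq_add_neg, add_comm] using this

theorem exists_hasDerivAt_eqOn_Ici {x x' : ℝ → E}
    (hx : ∀ t, 0 ≤ t → HasDerivWithinAt x (x' t) (Ici 0) t) :
    ∃ z : ℝ → E, EqOn z x (Ici 0) ∧ ∀ t, 0 ≤ t → HasDerivAt z (x' t) t := by
  set z : ℝ → E := fun t => if 0 ≤ t then x t else x 0 + t • x' 0
  have hzx : EqOn z x (Ici 0) := fun t ht => if_pos ht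
  refine ⟨z, hzx, fun t ht => ?_⟩
  rcases ht.eq_or_lt with rfl | ht
  · have hleft : HasDerivWithinAt z (x' 0) (Iic 0) 0 := by
      have := ((hasDerivAt_id (0 : ℝ)).smul_const (x' 0)).const_add (x 0)
      refine (by simpa using this.hasDerivWithinAt : HasDerivWithinAt
        (fun t : ℝ => x 0 + t • x' 0) (x' 0) (Iic 0) 0).congr (fun t ht => ?_) ?_
      · rcases ht.out.lt_or_eq with ht | rfl
        · exact if_neg (not_le.2 ht)
        · simp [z]
      · simp [z]
    have := hleft.union ((hx 0 le_rfl).congr hzx (hzx self_mem_Ici))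
    rwa [Iic_union_Ici, hasDerivWithinAt_univ] at this
  · exact ((hx t ht.le).hasDerivAt (Ici_mem_nhds ht)).congr_of_eventuallyEq
      (eventuallyEq_of_mem (Ici_mem_nhds ht) hzx)

theorem continuousOn_integral_Ioc {g : ℝ → E} (hg : ∀ t, 0 ≤ t → IntegrableOn g (Ioc 0 t)) :
    ContinuousOn (fun t => ∫ s in Ioc 0 t, g s) (Ici 0) := fun t₀ ht₀ =>
  (intervalIntegral.continuousOn_primitive ((integrableOn_Icc_iff_integrableOn_Ioc).2
    (hg (t₀ + 1) (by linarith [ht₀.out])))).continuousWithinAt ⟨ht₀, by linarith⟩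
    |>.mono_of_mem_nhdsWithin <| mem_nhdsWithin.2
      ⟨Iio (t₀ + 1), isOpen_Iio, lt_add_one t₀, fun _ hs => ⟨hs.2, hs.1.out.le⟩⟩

end RealFunctions

theorem BoundedContinuousFunction.exists_forall_apply_eq_max {E : Type*} [NormedAddCommGroup E]
    {g : ℝ → E} (hg : ContinuousOn g (Ici 0)) {M : ℝ} (hM : ∀ t, 0 ≤ t → ‖g t‖ ≤ M) :
    ∃ e : ℝ →ᵇ E, ∀ t, e t = g (max t 0) :=
  ⟨.ofNormedAddCommGroup _ (hg.comp_continuous (continuous_id.max continuous_const)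
    fun t => le_max_right t 0) M fun t => hM _ (le_max_right t 0), fun _ => rfl⟩

theorem continuousOn_apply_of_continuousOn_uncurry {α β γ : Type*} [TopologicalSpace α]
    [TopologicalSpace β] [TopologicalSpace γ] {f : α → β → γ} {s : Set α}
    (hf : ContinuousOn (fun p : α × β => f p.1 p.2) (s ×ˢ univ)) {z : α → β}
    (hz : ContinuousOn z s) : ContinuousOn (fun a => f a (z a)) s :=
  hf.comp (continuousOn_id.prodMk hz) fun _ ha => ⟨ha, mem_univ _⟩

theorem exists_fixedPoint_norm_le {E : Type*} [NormedAddCommGroup E] [CompleteSpace E]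
    {Φ : E → E} {κ M : ℝ} (hκ₀ : 0 ≤ κ) (hκ : κ < 1)
    (hΦ : ∀ a b, dist (Φ a) (Φ b) ≤ κ * dist a b) (hΦ₀ : ‖Φ 0‖ ≤ M) :
    ∃ e, Φ e = e ∧ ‖e‖ ≤ M / (1 - κ) := by
  have hcontr : ContractingWith (Real.toNNReal κ) Φ :=
    ⟨by simpa using hκ, LipschitzWith.of_dist_le_mul fun a b => by
      rw [Real.coe_toNNReal _ hκ₀]; exact hΦ a b⟩
  set e := ContractingWith.fixedPoint Φ hcontr
  have hfix : Φ e = e := hcontr.fixedPoint_isFixedPt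
  refine ⟨e, hfix, (le_div_iff₀ (sub_pos.2 hκ)).2 ?_⟩
  have := (dist_triangle (Φ e) (Φ 0) 0).trans
    (add_le_add (hΦ e 0) ((dist_zero_right _).trans_le hΦ₀))
  rw [hfix, dist_zero_right] at this
  linarith

section EvolutionFamily

variable {X : Type*} [NormedAddCommGroup X] [NormedSpace ℝ X]

structure IsEvolutionFamily (A : ℝ → X →L[ℝ] X) (T : ℝ → ℝ → X →L[ℝ] X) : Prop where
  continuousOn_generator : ContinuousOn A (Ici 0)
  self_eq_one : ∀ t, 0 ≤ t → T t t = 1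
  comp_eq : ∀ t s r, 0 ≤ r → 0 ≤ s → 0 ≤ t → (T t s).comp (T s r) = T t r
  hasDerivAt : ∀ s, 0 ≤ s → ∀ v : X, ∀ t, 0 ≤ t →
    HasDerivAt (fun r => T r s v) (A t (T t s v)) t

namespace IsEvolutionFamily

variable {A : ℝ → X →L[ℝ] X} {T : ℝ → ℝ → X →L[ℝ] X} {r s t : ℝ}

theorem apply_apply (hT : IsEvolutionFamily A T) (ht : 0 ≤ t) (hs : 0 ≤ s) (hr : 0 ≤ r)
    (v : X) : T t s (T s r v) = T t r v := by
  rw [← ContinuousLinearMap.comp_apply, hT.comp_eq t s r hr hs ht]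

theorem apply_apply_self (hT : IsEvolutionFamily A T) (ht : 0 ≤ t) (hs : 0 ≤ s) (v : X) :
    T t s (T s t v) = v := by
  rw [hT.apply_apply ht hs ht, hT.self_eq_one t ht, one_apply_eq_self]

theorem exists_norm_le (hT : IsEvolutionFamily A T) (R : ℝ) :
    ∃ C, ∀ a ∈ Icc 0 R, ∀ b ∈ Icc 0 R, ‖T a b‖ ≤ C := by
  obtain ⟨M, hM⟩ := isCompact_Icc.exists_bound_of_continuousOn
    (hT.continuousOn_generator.mono (Icc_subset_Ici_self : Icc (0 : ℝ) R ⊆ Ici 0))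
  refine ⟨Real.exp (max M 0 * R), fun a ha b hb =>
    ContinuousLinearMap.opNorm_le_bound _ (Real.exp_pos _).le fun v => ?_⟩
  have hsub : uIcc b a ⊆ Icc 0 R := uIcc_subset_Icc hb ha
  have hgron := norm_le_exp_mul_abs_of_norm_deriv_le (g := fun r => T r b v) (K := max M 0)
    (fun r hr => hT.hasDerivAt b hb.1 v r (hsub hr).1)
    (fun r hr => (A r).le_of_opNorm_le ((hM r (hsub hr)).trans (le_max_left _ _)) _)
  rw [hT.self_eq_one b hb.1, one_apply_eq_self] at hgron
  refine hgron.trans (mul_le_mul_of_nonneg_right (Real.exp_le_exp.2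
    (mul_le_mul_of_nonneg_left ?_ (le_max_right _ _))) (norm_nonneg _))
  exact abs_sub_le_iff.2 ⟨by linarith [ha.2, hb.1], by linarith [ha.1, hb.2]⟩

theorem eventually_norm_le (hT : IsEvolutionFamily A T) (hr : 0 ≤ r) (t₀ : ℝ) :
    ∃ C, ∀ᶠ t in 𝓝[Ici 0] t₀, ‖T t r‖ ≤ C ∧ ‖T r t‖ ≤ C := by
  obtain ⟨C, hC⟩ := hT.exists_norm_le (max r (t₀ + 1))
  have hrR : r ∈ Icc 0 (max r (t₀ + 1)) := ⟨hr, le_max_left _ _⟩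
  refine ⟨C, ?_⟩
  filter_upwards [self_mem_nhdsWithin, nhdsWithin_le_nhds (Iio_mem_nhds (lt_add_one t₀))]
    with t ht ht'
  have htR : t ∈ Icc 0 (max r (t₀ + 1)) := ⟨ht, le_max_of_le_right (le_of_lt ht')⟩
  exact ⟨hC t htR r hrR, hC r hrR t htR⟩

theorem continuousOn_apply_left (hT : IsEvolutionFamily A T) (hr : 0 ≤ r) {u : ℝ → X}
    (hu : ContinuousOn u (Ici 0)) : ContinuousOn (fun t => T t r (u t)) (Ici 0) := by
  intro t₀ ht₀
  obtain ⟨C, hC⟩ := hT.eventually_norm_le hr t₀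
  exact tendsto_clm_apply_of_norm_le (hC.mono fun _ h => h.1)
    (hT.hasDerivAt r hr _ t₀ ht₀).continuousAt.continuousWithinAt (hu t₀ ht₀)

theorem continuousWithinAt_apply_right (hT : IsEvolutionFamily A T) (hr : 0 ≤ r) {s₀ : ℝ}
    (hs₀ : 0 ≤ s₀) (v : X) : ContinuousWithinAt (fun s => T r s v) (Ici 0) s₀ := by
  obtain ⟨C, hC⟩ := hT.eventually_norm_le hr s₀
  have hback : Tendsto (fun s => v - T s s₀ v) (𝓝[Ici 0] s₀) (𝓝 0) := by
    have := ((hT.hasDerivAt s₀ hs₀ v s₀ hs₀).continuousAt.continuousWithinAt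
      (s := Ici 0)).tendsto.const_sub v
    rwa [hT.self_eq_one s₀ hs₀, one_apply_eq_self, sub_self] at this
  have hlim := (tendsto_clm_apply_of_norm_le (L₀ := T r s₀) (hC.mono fun _ h => h.2)
    (by simpa using tendsto_const_nhds) hback).add_const (T r s₀ v)
  rw [map_zero, zero_add] at hlim
  refine hlim.congr' ?_
  filter_upwards [self_mem_nhdsWithin] with s hs
  rw [map_sub, hT.apply_apply hr hs hs₀, sub_add_cancel]

theorem continuousOn_apply_right (hT : IsEvolutionFamily A T) (hr : 0 ≤ r) {u : ℝ → X}
    (hu : ContinuousOn u (Ici 0)) : ContinuousOn (fun s => T r s (u s)) (Ici 0) := by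
  intro s₀ hs₀
  obtain ⟨C, hC⟩ := hT.eventually_norm_le hr s₀
  exact tendsto_clm_apply_of_norm_le (hC.mono fun _ h => h.2)
    (hT.continuousWithinAt_apply_right hr hs₀ _) (hu s₀ hs₀)

theorem hasDerivAt_apply_right_const (hT : IsEvolutionFamily A T) (hr : 0 ≤ r) {s₀ : ℝ}
    (hs₀ : 0 < s₀) (v : X) : HasDerivAt (fun s => T r s v) (-T r s₀ (A s₀ v)) s₀ := by
  have hpunct : 𝓝[≠] s₀ ≤ 𝓝[Ici 0] s₀ :=
    nhdsWithin_le_nhds.trans (nhdsWithin_eq_nhds.2 (Ici_mem_nhds hs₀)).ge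
  -- `T s₀ s v - v = -T s₀ s (T s s₀ v - v)`, and `T s s₀ v` is differentiable in `s`.
  have hself : HasDerivAt (fun s => T s₀ s v) (-A s₀ v) s₀ := by
    obtain ⟨C, hC⟩ := hT.eventually_norm_le hs₀.le s₀
    have hslope := hasDerivAt_iff_tendsto_slope.1 (hT.hasDerivAt s₀ hs₀.le v s₀ hs₀.le)
    rw [hT.self_eq_one s₀ hs₀.le, one_apply_eq_self] at hslope
    have hlim := (tendsto_clm_apply_of_norm_le ((hC.filter_mono hpunct).mono fun _ h => h.2)
      ((hT.continuousWithinAt_apply_right hs₀.le hs₀.le (A s₀ v)).tendsto.mono_left hpunct)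
      hslope).neg
    rw [hT.self_eq_one s₀ hs₀.le, one_apply_eq_self] at hlim
    rw [hasDerivAt_iff_tendsto_slope]
    refine hlim.congr' ?_
    filter_upwards [hpunct self_mem_nhdsWithin] with s hs
    simp only [slope_def_module, map_smul, map_sub, hT.apply_apply_self hs₀.le hs,
      hT.self_eq_one s₀ hs₀.le, one_apply_eq_self]
    rw [← smul_neg, neg_sub]
  have hcomp := (T r s₀).hasFDerivAt.comp_hasDerivAt s₀ hself
  rw [map_neg] at hcomp
  refine hcomp.congr_of_eventuallyEq ?_
  filter_upwards [Ici_mem_nhds hs₀] with s hs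
  exact (hT.apply_apply hr hs₀.le hs v).symm

theorem hasDerivAt_apply_right (hT : IsEvolutionFamily A T) (hr : 0 ≤ r) {s₀ : ℝ}
    (hs₀ : 0 < s₀) {w : ℝ → X} {w' : X} (hw : HasDerivAt w w' s₀) :
    HasDerivAt (fun s => T r s (w s)) (T r s₀ (w' - A s₀ (w s₀))) s₀ := by
  obtain ⟨C, hC⟩ := hT.eventually_norm_le hr s₀
  have := hasDerivWithinAt_clm_apply_of_norm_le (hC.mono fun _ h => h.2)
    (hT.hasDerivAt_apply_right_const hr hs₀ (w s₀)).hasDerivWithinAt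
    (hT.continuousWithinAt_apply_right hr hs₀.le w') hw.hasDerivWithinAt
  rw [map_sub, sub_eq_add_neg]
  exact this.hasDerivAt (Ici_mem_nhds hs₀)

theorem hasDerivWithinAt_apply_left (hT : IsEvolutionFamily A T) (hr : 0 ≤ r) {t₀ : ℝ}
    (ht₀ : 0 ≤ t₀) {ρ : ℝ → X} {ρ' : X} (hρ : HasDerivWithinAt ρ ρ' (Ici 0) t₀) :
    HasDerivWithinAt (fun t => T t r (ρ t)) (T t₀ r ρ' + A t₀ (T t₀ r (ρ t₀))) (Ici 0) t₀ := by
  obtain ⟨C, hC⟩ := hT.eventually_norm_le hr t₀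
  exact hasDerivWithinAt_clm_apply_of_norm_le (hC.mono fun _ h => h.1)
    (hT.hasDerivAt r hr _ t₀ ht₀).hasDerivWithinAt
    (hT.hasDerivAt r hr ρ' t₀ ht₀).continuousAt.continuousWithinAt hρ

theorem aestronglyMeasurable_apply_comp (hT : IsEvolutionFamily A T) {P : ℝ → X →L[ℝ] X}
    (hP : ∀ s, 0 ≤ s → (T 0 s).comp (P s) = (P 0).comp (T 0 s)) {u : ℝ → X}
    (hu : AEStronglyMeasurable (fun s => T 0 s (u s)) (volume.restrict (Ioi 0))) (ht : 0 ≤ t) :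
    AEStronglyMeasurable (fun s => T t s (P s (u s))) (volume.restrict (Ioi 0)) :=
  (((T t 0).comp (P 0)).continuous.comp_aestronglyMeasurable hu).congr <|
    (ae_restrict_iff' measurableSet_Ioi).2 <| Eventually.of_forall fun s hs => by
      change T t 0 (P 0 (T 0 s (u s))) = T t s (P s (u s))
      rw [← ContinuousLinearMap.comp_apply (P 0), ← hP s (le_of_lt hs),
        ContinuousLinearMap.comp_apply, hT.apply_apply ht le_rfl (le_of_lt hs)]

variable [CompleteSpace X] {y yd : ℝ → X}

-- `yd` need not be measurable, but this integrand is the derivative of `s ↦ T 0 s (y s)`.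
theorem aestronglyMeasurable_apply_sub (hT : IsEvolutionFamily A T)
    (hy : ∀ t, 0 ≤ t → HasDerivAt y (yd t) t) :
    AEStronglyMeasurable (fun s => T 0 s (yd s - A s (y s))) (volume.restrict (Ioi 0)) :=
  (aestronglyMeasurable_deriv (fun s => T 0 s (y s)) _).congr <|
    (ae_restrict_iff' measurableSet_Ioi).2 <| Eventually.of_forall fun s hs =>
      (hT.hasDerivAt_apply_right le_rfl hs (hy s (le_of_lt hs))).deriv

theorem aestronglyMeasurable_apply_sub_sub (hT : IsEvolutionFamily A T)
    (hy : ∀ t, 0 ≤ t → HasDerivAt y (yd t) t) {F : ℝ → X} (hF : ContinuousOn F (Ici 0)) :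
    AEStronglyMeasurable (fun s => T 0 s (F s - (yd s - A s (y s))))
      (volume.restrict (Ioi 0)) :=
  ((((hT.continuousOn_apply_right le_rfl hF).mono Ioi_subset_Ici_self).aestronglyMeasurable
    measurableSet_Ioi).sub (hT.aestronglyMeasurable_apply_sub hy)).congr <|
    ae_of_all _ fun s => by simp only [Pi.sub_apply, map_sub]

theorem apply_eq_add_integral (hT : IsEvolutionFamily A T)
    (hy : ∀ t, 0 ≤ t → HasDerivAt y (yd t) t) (ht : 0 ≤ t)
    (hint : IntegrableOn (fun s => T 0 s (yd s - A s (y s))) (Ioc 0 t)) :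
    T 0 t (y t) = y 0 + ∫ s in Ioc 0 t, T 0 s (yd s - A s (y s)) := by
  have hycont : ContinuousOn y (Ici 0) := fun s hs => (hy s hs).continuousAt.continuousWithinAt
  have hftc := intervalIntegral.integral_eq_sub_of_hasDerivAt_of_le ht
    ((hT.continuousOn_apply_right le_rfl hycont).mono Icc_subset_Ici_self)
    (fun s hs => hT.hasDerivAt_apply_right le_rfl hs.1 (hy s hs.1.le))
    ((intervalIntegrable_iff_integrableOn_Ioc_of_le ht).2 hint)
  rw [intervalIntegral.integral_of_le ht, hT.self_eq_one 0 le_rfl, one_apply_eq_self] at hftc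
  rw [hftc, add_sub_cancel]

theorem hasDerivWithinAt_of_eq_integral (hT : IsEvolutionFamily A T) {F x : ℝ → X} {v : X}
    (hF : ContinuousOn F (Ici 0))
    (hx : ∀ t, 0 ≤ t → x t = T t 0 (v + ∫ s in Ioc 0 t, T 0 s (F s))) (ht : 0 ≤ t) :
    HasDerivWithinAt x (A t (x t) + F t) (Ici 0) t := by
  -- `s ↦ T 0 s (F s)` extended continuously to `s < 0`, so that the FTC applies on `ℝ`
  set ι : ℝ → X := fun s => T 0 (max s 0) (F (max s 0))
  have hι : Continuous ι := (hT.continuousOn_apply_right le_rfl hF).comp_continuous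
    (continuous_id.max continuous_const) fun s => le_max_right s 0
  have hprim : ∀ τ, 0 ≤ τ → ∫ s in Ioc 0 τ, T 0 s (F s) = ∫ s in (0)..τ, ι s := fun τ hτ => by
    rw [intervalIntegral.integral_of_le hτ]
    exact setIntegral_congr_fun measurableSet_Ioc fun s hs => by simp [ι, max_eq_left hs.1.le]
  have hρ : HasDerivWithinAt (fun τ => v + ∫ s in (0)..τ, ι s) (ι t) (Ici 0) t :=
    ((hι.integral_hasStrictDerivAt 0 t).hasDerivAt.const_add v).hasDerivWithinAt
  have := hT.hasDerivWithinAt_apply_left le_rfl ht hρ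
  rw [show ι t = T 0 t (F t) by simp [ι, max_eq_left ht], hT.apply_apply_self ht le_rfl,
    ← hprim t ht, ← hx t ht, add_comm] at this
  exact this.congr (fun τ hτ => by rw [hx τ hτ, hprim τ hτ]) (by rw [hx t ht, hprim t ht])

end IsEvolutionFamily

end EvolutionFamily

structure IsGrowthRate (μ μ' : ℝ → ℝ) : Prop where
  strictMonoOn : StrictMonoOn μ (Ici 0)
  hasDerivAt : ∀ t, 0 ≤ t → HasDerivAt μ (μ' t) t
  map_zero : μ 0 = 1
  tendsto_atTop : Tendsto μ atTop atTop

namespace IsGrowthRate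

variable {μ μ' : ℝ → ℝ} {a p t : ℝ}

theorem one_le (hμ : IsGrowthRate μ μ') (ht : 0 ≤ t) : 1 ≤ μ t :=
  hμ.map_zero ▸ hμ.strictMonoOn.monotoneOn self_mem_Ici ht ht

theorem pos (hμ : IsGrowthRate μ μ') (ht : 0 ≤ t) : 0 < μ t :=
  one_pos.trans_le (hμ.one_le ht)

theorem deriv_nonneg (hμ : IsGrowthRate μ μ') (ht : 0 ≤ t) : 0 ≤ μ' t :=
  (hμ.hasDerivAt t ht).hasDerivWithinAt.nonneg_of_monotoneOn
    (accPt_principal_iff_nhdsWithin.2 (by simpa using (inferInstance : (𝓝[>] t).NeBot)))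
    (hμ.strictMonoOn.monotoneOn.mono (Ioi_subset_Ici ht))

theorem hasDerivAt_div_rpow (hμ : IsGrowthRate μ μ') (ha : 0 < a) (p : ℝ) (ht : 0 ≤ t) :
    HasDerivAt (fun s => (μ s / a) ^ p) (p * (μ t / a) ^ p * (μ' t / μ t)) t := by
  have hq : 0 < μ t / a := div_pos (hμ.pos ht) ha
  convert ((hμ.hasDerivAt t ht).div_const a).rpow_const (p := p) (Or.inl hq.ne') using 1
  rw [Real.rpow_sub_one hq.ne']
  field_simp [(hμ.pos ht).ne']

theorem integral_Ioc_div_rpow (hμ : IsGrowthRate μ μ') (ha : 0 < a) (hp : 0 ≤ p) (ht : 0 ≤ t) :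
    IntegrableOn (fun s => p * (μ s / a) ^ p * (μ' s / μ s)) (Ioc 0 t) ∧
      ∫ s in Ioc 0 t, p * (μ s / a) ^ p * (μ' s / μ s) = (μ t / a) ^ p - (1 / a) ^ p := by
  have hcont : ContinuousOn (fun s => (μ s / a) ^ p) (Icc 0 t) := fun s hs =>
    (hμ.hasDerivAt_div_rpow ha p hs.1).continuousAt.continuousWithinAt
  have hderiv : ∀ s ∈ Ioo 0 t, HasDerivAt (fun s => (μ s / a) ^ p)
      (p * (μ s / a) ^ p * (μ' s / μ s)) s := fun s hs => hμ.hasDerivAt_div_rpow ha p hs.1.le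
  have hint := intervalIntegral.integrableOn_deriv_of_nonneg hcont hderiv fun s hs =>
    mul_nonneg (mul_nonneg hp (Real.rpow_nonneg (div_pos (hμ.pos hs.1.le) ha).le _))
      (div_nonneg (hμ.deriv_nonneg hs.1.le) (hμ.pos hs.1.le).le)
  refine ⟨hint, ?_⟩
  rw [← intervalIntegral.integral_of_le ht, intervalIntegral.integral_eq_sub_of_hasDerivAt_of_le
    ht hcont hderiv ((intervalIntegrable_iff_integrableOn_Ioc_of_le ht).2 hint), hμ.map_zero]

theorem integral_Ioi_div_rpow (hμ : IsGrowthRate μ μ') (ha : 0 < a) (hp : p < 0) (ht : 0 ≤ t) :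
    IntegrableOn (fun s => -p * (μ s / a) ^ p * (μ' s / μ s)) (Ioi t) ∧
      ∫ s in Ioi t, -p * (μ s / a) ^ p * (μ' s / μ s) = (μ t / a) ^ p := by
  have hderiv : ∀ s ∈ Ici t, HasDerivAt (fun s => -(μ s / a) ^ p)
      (-p * (μ s / a) ^ p * (μ' s / μ s)) s := fun s hs => by
    convert (hμ.hasDerivAt_div_rpow ha p (ht.trans hs)).neg using 1 <;> first | rfl | ring
  have hnonneg : ∀ s ∈ Ioi t, 0 ≤ -p * (μ s / a) ^ p * (μ' s / μ s) := fun s hs =>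
    have hs : 0 ≤ s := ht.trans hs.out.le
    mul_nonneg (mul_nonneg (neg_nonneg.2 hp.le) (Real.rpow_nonneg (div_pos (hμ.pos hs) ha).le _))
      (div_nonneg (hμ.deriv_nonneg hs) (hμ.pos hs).le)
  have hlim : Tendsto (fun s => -(μ s / a) ^ p) atTop (𝓝 0) := by
    simpa using ((tendsto_rpow_neg_atTop (neg_pos.2 hp)).comp
      (hμ.tendsto_atTop.atTop_div_const ha)).neg
  refine ⟨integrableOn_Ioi_deriv_of_nonneg' hderiv hnonneg hlim, ?_⟩
  rw [integral_Ioi_of_hasDerivAt_of_nonneg' hderiv hnonneg hlim]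
  ring

end IsGrowthRate

section Dichotomy

variable {X : Type*} [NormedAddCommGroup X] [NormedSpace ℝ X]

structure HasMuNuDichotomy (T : ℝ → ℝ → X →L[ℝ] X) (P1 P2 : ℝ → X →L[ℝ] X) (μ ν : ℝ → ℝ)
    (D lam d : ℝ) : Prop where
  add_eq_one : ∀ t, 0 ≤ t → P1 t + P2 t = 1
  comp_proj : ∀ t s, 0 ≤ s → 0 ≤ t →
    (T t s).comp (P1 s) = (P1 t).comp (T t s) ∧ (T t s).comp (P2 s) = (P2 t).comp (T t s)
  norm_stable_le : ∀ t s, 0 ≤ s → s ≤ t →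
    ‖(T t s).comp (P1 s)‖ ≤ D * (μ t / μ s) ^ (-lam) * (ν s) ^ d
  norm_unstable_le : ∀ t s, 0 ≤ t → t ≤ s →
    ‖(T t s).comp (P2 s)‖ ≤ D * (μ s / μ t) ^ (-lam) * (ν s) ^ d

noncomputable def lyapunovPerron (T : ℝ → ℝ → X →L[ℝ] X) (P1 P2 : ℝ → X →L[ℝ] X)
    (u : ℝ → X) (t : ℝ) : X :=
  (∫ s in Ioc 0 t, T t s (P1 s (u s))) - ∫ s in Ioi t, T t s (P2 s (u s))

namespace HasMuNuDichotomy

variable {A : ℝ → X →L[ℝ] X} {T : ℝ → ℝ → X →L[ℝ] X} {P1 P2 : ℝ → X →L[ℝ] X}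
  {μ μ' ν : ℝ → ℝ} {D lam d K : ℝ} {u : ℝ → X} {s t : ℝ}

theorem norm_stable_apply_le (hdich : HasMuNuDichotomy T P1 P2 μ ν D lam d)
    (hμ : IsGrowthRate μ μ') (hν : 0 < ν s ^ d) (hs : 0 ≤ s) (hst : s ≤ t) {w : X}
    (hw : ‖w‖ ≤ K * μ' s / (μ s * ν s ^ d)) :
    ‖T t s (P1 s w)‖ ≤ D * K * ((μ s / μ t) ^ lam * (μ' s / μ s)) := by
  have hq : 0 ≤ μ t / μ s := div_nonneg (hμ.pos (hs.trans hst)).le (hμ.pos hs).le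
  have := ((T t s).comp (P1 s)).norm_apply_le_of_le_mul_of_le_div
    (hdich.norm_stable_le t s hs hst) hν hw
  rw [Real.rpow_neg hq, ← Real.inv_rpow hq, inv_div] at this
  exact this.trans_eq (by ring)

theorem norm_unstable_apply_le (hdich : HasMuNuDichotomy T P1 P2 μ ν D lam d)
    (hν : 0 < ν s ^ d) (ht : 0 ≤ t) (hts : t ≤ s) {w : X}
    (hw : ‖w‖ ≤ K * μ' s / (μ s * ν s ^ d)) :
    ‖T t s (P2 s w)‖ ≤ D * K * ((μ s / μ t) ^ (-lam) * (μ' s / μ s)) :=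
  (((T t s).comp (P2 s)).norm_apply_le_of_le_mul_of_le_div
    (hdich.norm_unstable_le t s ht hts) hν hw).trans_eq (by ring)

theorem apply_eq_add (hdich : HasMuNuDichotomy T P1 P2 μ ν D lam d)
    (hT : IsEvolutionFamily A T) (hs : 0 ≤ s) (ht : 0 ≤ t) (w : X) :
    T 0 s w = T 0 t (T t s (P1 s w)) + T 0 s (P2 s w) := by
  rw [hT.apply_apply le_rfl ht hs, ← map_add, ← add_apply, hdich.add_eq_one s hs,
    one_apply_eq_self]

theorem ae_norm_stable_le (hdich : HasMuNuDichotomy T P1 P2 μ ν D lam d)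
    (hμ : IsGrowthRate μ μ') (hν : ∀ s, 0 ≤ s → 0 < ν s ^ d) (hlam : 0 < lam)
    (huK : ∀ s, 0 ≤ s → ‖u s‖ ≤ K * μ' s / (μ s * ν s ^ d)) :
    ∀ᵐ s ∂volume.restrict (Ioc 0 t),
      ‖T t s (P1 s (u s))‖ ≤ D * K / lam * (lam * (μ s / μ t) ^ lam * (μ' s / μ s)) :=
  (ae_restrict_iff' measurableSet_Ioc).2 <| Eventually.of_forall fun s hs =>
    (hdich.norm_stable_apply_le hμ (hν s hs.1.le) hs.1.le hs.2 (huK s hs.1.le)).trans_eq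
      (by field_simp)

theorem ae_norm_unstable_le (hdich : HasMuNuDichotomy T P1 P2 μ ν D lam d)
    (hν : ∀ s, 0 ≤ s → 0 < ν s ^ d) (hlam : 0 < lam)
    (huK : ∀ s, 0 ≤ s → ‖u s‖ ≤ K * μ' s / (μ s * ν s ^ d)) (ht : 0 ≤ t) :
    ∀ᵐ s ∂volume.restrict (Ioi t),
      ‖T t s (P2 s (u s))‖ ≤ D * K / lam * (-(-lam) * (μ s / μ t) ^ (-lam) * (μ' s / μ s)) :=
  (ae_restrict_iff' measurableSet_Ioi).2 <| Eventually.of_forall fun s hs =>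
    (hdich.norm_unstable_apply_le (hν s (ht.trans hs.out.le)) ht hs.out.le
      (huK s (ht.trans hs.out.le))).trans_eq (by field_simp)

theorem integrableOn_stable (hdich : HasMuNuDichotomy T P1 P2 μ ν D lam d)
    (hT : IsEvolutionFamily A T) (hμ : IsGrowthRate μ μ') (hν : ∀ s, 0 ≤ s → 0 < ν s ^ d)
    (hlam : 0 < lam) (hu : AEStronglyMeasurable (fun s => T 0 s (u s)) (volume.restrict (Ioi 0)))
    (huK : ∀ s, 0 ≤ s → ‖u s‖ ≤ K * μ' s / (μ s * ν s ^ d)) (ht : 0 ≤ t) :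
    IntegrableOn (fun s => T t s (P1 s (u s))) (Ioc 0 t) :=
  Integrable.mono' (((hμ.integral_Ioc_div_rpow (hμ.pos ht) hlam.le ht).1).const_mul _)
    ((hT.aestronglyMeasurable_apply_comp (fun s hs => (hdich.comp_proj 0 s hs le_rfl).1) hu
      ht).mono_set Ioc_subset_Ioi_self)
    (hdich.ae_norm_stable_le hμ hν hlam huK)

theorem integrableOn_unstable (hdich : HasMuNuDichotomy T P1 P2 μ ν D lam d)
    (hT : IsEvolutionFamily A T) (hμ : IsGrowthRate μ μ') (hν : ∀ s, 0 ≤ s → 0 < ν s ^ d)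
    (hlam : 0 < lam) (hu : AEStronglyMeasurable (fun s => T 0 s (u s)) (volume.restrict (Ioi 0)))
    (huK : ∀ s, 0 ≤ s → ‖u s‖ ≤ K * μ' s / (μ s * ν s ^ d)) (ht : 0 ≤ t) :
    IntegrableOn (fun s => T t s (P2 s (u s))) (Ioi t) :=
  Integrable.mono'
    (((hμ.integral_Ioi_div_rpow (hμ.pos ht) (neg_neg_of_pos hlam) ht).1).const_mul _)
    ((hT.aestronglyMeasurable_apply_comp (fun s hs => (hdich.comp_proj 0 s hs le_rfl).2) hu
      ht).mono_set (Ioi_subset_Ioi ht))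
    (hdich.ae_norm_unstable_le hν hlam huK ht)

theorem integrableOn_apply (hdich : HasMuNuDichotomy T P1 P2 μ ν D lam d)
    (hT : IsEvolutionFamily A T) (hμ : IsGrowthRate μ μ') (hν : ∀ s, 0 ≤ s → 0 < ν s ^ d)
    (hlam : 0 < lam) (hu : AEStronglyMeasurable (fun s => T 0 s (u s)) (volume.restrict (Ioi 0)))
    (huK : ∀ s, 0 ≤ s → ‖u s‖ ≤ K * μ' s / (μ s * ν s ^ d)) (ht : 0 ≤ t) :
    IntegrableOn (fun s => T 0 s (u s)) (Ioc 0 t) :=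
  IntegrableOn.congr_fun
    (((T 0 t).integrable_comp (hdich.integrableOn_stable hT hμ hν hlam hu huK ht)).add
      ((hdich.integrableOn_unstable hT hμ hν hlam hu huK le_rfl).mono_set Ioc_subset_Ioi_self))
    (fun _ hs => (hdich.apply_eq_add hT hs.1.le ht _).symm) measurableSet_Ioc

theorem norm_integral_stable_le (hdich : HasMuNuDichotomy T P1 P2 μ ν D lam d)
    (hμ : IsGrowthRate μ μ') (hν : ∀ s, 0 ≤ s → 0 < ν s ^ d) (hlam : 0 < lam) (hD : 0 ≤ D)
    (hK : 0 ≤ K) (huK : ∀ s, 0 ≤ s → ‖u s‖ ≤ K * μ' s / (μ s * ν s ^ d)) (ht : 0 ≤ t) :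
    ‖∫ s in Ioc 0 t, T t s (P1 s (u s))‖ ≤ D * K / lam := by
  obtain ⟨hint, hval⟩ := hμ.integral_Ioc_div_rpow (hμ.pos ht) hlam.le ht
  refine (norm_integral_le_of_norm_le (hint.const_mul _)
    (hdich.ae_norm_stable_le hμ hν hlam huK)).trans ?_
  rw [integral_const_mul, hval, div_self (hμ.pos ht).ne', Real.one_rpow]
  have : 0 ≤ (1 / μ t) ^ lam := Real.rpow_nonneg (one_div_nonneg.2 (hμ.pos ht).le) _
  have : 0 ≤ D * K / lam := by positivity
  nlinarith

theorem norm_integral_unstable_le (hdich : HasMuNuDichotomy T P1 P2 μ ν D lam d)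
    (hμ : IsGrowthRate μ μ') (hν : ∀ s, 0 ≤ s → 0 < ν s ^ d) (hlam : 0 < lam)
    (huK : ∀ s, 0 ≤ s → ‖u s‖ ≤ K * μ' s / (μ s * ν s ^ d)) (ht : 0 ≤ t) :
    ‖∫ s in Ioi t, T t s (P2 s (u s))‖ ≤ D * K / lam := by
  obtain ⟨hint, hval⟩ := hμ.integral_Ioi_div_rpow (hμ.pos ht) (neg_neg_of_pos hlam) ht
  refine (norm_integral_le_of_norm_le (hint.const_mul _)
    (hdich.ae_norm_unstable_le hν hlam huK ht)).trans_eq ?_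
  rw [integral_const_mul, hval, div_self (hμ.pos ht).ne', Real.one_rpow, mul_one]

theorem norm_lyapunovPerron_le (hdich : HasMuNuDichotomy T P1 P2 μ ν D lam d)
    (hμ : IsGrowthRate μ μ') (hν : ∀ s, 0 ≤ s → 0 < ν s ^ d) (hlam : 0 < lam) (hD : 0 ≤ D)
    (hK : 0 ≤ K) (huK : ∀ s, 0 ≤ s → ‖u s‖ ≤ K * μ' s / (μ s * ν s ^ d)) (ht : 0 ≤ t) :
    ‖lyapunovPerron T P1 P2 u t‖ ≤ 2 * D * K / lam := by
  have hS := hdich.norm_integral_stable_le hμ hν hlam hD hK huK ht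
  have hU := hdich.norm_integral_unstable_le hμ hν hlam huK ht
  have h2 : 2 * D * K / lam = D * K / lam + D * K / lam := by ring
  exact (norm_sub_le _ _).trans (by linarith)

theorem lyapunovPerron_sub (hdich : HasMuNuDichotomy T P1 P2 μ ν D lam d)
    (hT : IsEvolutionFamily A T) (hμ : IsGrowthRate μ μ') (hν : ∀ s, 0 ≤ s → 0 < ν s ^ d)
    (hlam : 0 < lam) {v : ℝ → X} {K' : ℝ}
    (hu : AEStronglyMeasurable (fun s => T 0 s (u s)) (volume.restrict (Ioi 0)))
    (huK : ∀ s, 0 ≤ s → ‖u s‖ ≤ K * μ' s / (μ s * ν s ^ d))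
    (hv : AEStronglyMeasurable (fun s => T 0 s (v s)) (volume.restrict (Ioi 0)))
    (hvK : ∀ s, 0 ≤ s → ‖v s‖ ≤ K' * μ' s / (μ s * ν s ^ d)) (ht : 0 ≤ t) :
    lyapunovPerron T P1 P2 (fun s => u s - v s) t =
      lyapunovPerron T P1 P2 u t - lyapunovPerron T P1 P2 v t := by
  simp only [lyapunovPerron, map_sub]
  rw [integral_sub (hdich.integrableOn_stable hT hμ hν hlam hu huK ht)
      (hdich.integrableOn_stable hT hμ hν hlam hv hvK ht),
    integral_sub (hdich.integrableOn_unstable hT hμ hν hlam hu huK ht)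
      (hdich.integrableOn_unstable hT hμ hν hlam hv hvK ht)]
  abel

variable [CompleteSpace X]

theorem lyapunovPerron_eq (hdich : HasMuNuDichotomy T P1 P2 μ ν D lam d)
    (hT : IsEvolutionFamily A T) (hμ : IsGrowthRate μ μ') (hν : ∀ s, 0 ≤ s → 0 < ν s ^ d)
    (hlam : 0 < lam) (hu : AEStronglyMeasurable (fun s => T 0 s (u s)) (volume.restrict (Ioi 0)))
    (huK : ∀ s, 0 ≤ s → ‖u s‖ ≤ K * μ' s / (μ s * ν s ^ d)) (ht : 0 ≤ t) :
    lyapunovPerron T P1 P2 u t =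
      T t 0 ((∫ s in Ioc 0 t, T 0 s (u s)) - ∫ s in Ioi 0, T 0 s (P2 s (u s))) := by
  have hS := hdich.integrableOn_stable hT hμ hν hlam hu huK ht
  have hU := hdich.integrableOn_unstable hT hμ hν hlam hu huK le_rfl
  have hsplit : ∫ s in Ioc 0 t, T 0 s (u s) =
      T 0 t (∫ s in Ioc 0 t, T t s (P1 s (u s))) + ∫ s in Ioc 0 t, T 0 s (P2 s (u s)) := by
    rw [← ContinuousLinearMap.integral_comp_comm _ hS,
      ← integral_add ((T 0 t).integrable_comp hS) (hU.mono_set Ioc_subset_Ioi_self)]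
    exact setIntegral_congr_fun measurableSet_Ioc fun s hs => hdich.apply_eq_add hT hs.1.le ht _
  have hunstable : ∫ s in Ioi 0, T 0 s (P2 s (u s)) =
      T 0 t (∫ s in Ioi t, T t s (P2 s (u s))) + ∫ s in Ioc 0 t, T 0 s (P2 s (u s)) := by
    rw [← Ioc_union_Ioi_eq_Ioi ht, setIntegral_union (Ioc_disjoint_Ioi le_rfl) measurableSet_Ioi
      (hU.mono_set Ioc_subset_Ioi_self) (hU.mono_set (Ioi_subset_Ioi ht)), add_comm,
      ← ContinuousLinearMap.integral_comp_comm _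
        (hdich.integrableOn_unstable hT hμ hν hlam hu huK ht)]
    congr 1
    exact setIntegral_congr_fun measurableSet_Ioi fun s hs =>
      (hT.apply_apply le_rfl ht (ht.trans hs.out.le) _).symm
  rw [hsplit, hunstable, add_sub_add_right_eq_sub, ← map_sub, hT.apply_apply_self ht le_rfl]
  rfl

theorem continuousOn_lyapunovPerron (hdich : HasMuNuDichotomy T P1 P2 μ ν D lam d)
    (hT : IsEvolutionFamily A T) (hμ : IsGrowthRate μ μ') (hν : ∀ s, 0 ≤ s → 0 < ν s ^ d)
    (hlam : 0 < lam) (hu : AEStronglyMeasurable (fun s => T 0 s (u s)) (volume.restrict (Ioi 0)))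
    (huK : ∀ s, 0 ≤ s → ‖u s‖ ≤ K * μ' s / (μ s * ν s ^ d)) :
    ContinuousOn (lyapunovPerron T P1 P2 u) (Ici 0) :=
  (hT.continuousOn_apply_left le_rfl ((continuousOn_integral_Ioc fun _ ht =>
    hdich.integrableOn_apply hT hμ hν hlam hu huK ht).sub continuousOn_const)).congr
    fun _ ht => hdich.lyapunovPerron_eq hT hμ hν hlam hu huK ht

end HasMuNuDichotomy

end Dichotomy

section Shadowing

variable {X : Type*} [NormedAddCommGroup X] [NormedSpace ℝ X]
  {A : ℝ → X →L[ℝ] X} {T : ℝ → ℝ → X →L[ℝ] X} {P1 P2 : ℝ → X →L[ℝ] X}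
  {μ μ' ν : ℝ → ℝ} {D lam d c δ K : ℝ} {f : ℝ → X → X} {y yd F : ℝ → X}

theorem norm_forcing_le (hμ : IsGrowthRate μ μ') (hν : ∀ s, 0 ≤ s → 0 < ν s ^ d) (hc : 0 ≤ c)
    (hfLip : ∀ t, 0 ≤ t → ∀ x y : X, ‖f t x - f t y‖ ≤ c * μ' t / (μ t * (ν t) ^ d) * ‖x - y‖)
    (hyd : ∀ t, 0 ≤ t → ‖yd t - A t (y t) - f t (y t)‖ ≤ δ * μ' t / (μ t * (ν t) ^ d))
    (e : ℝ →ᵇ X) {s : ℝ} (hs : 0 ≤ s) :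
    ‖f s (y s + e s) - (yd s - A s (y s))‖ ≤ (c * ‖e‖ + δ) * μ' s / (μ s * ν s ^ d) := by
  have hweight : 0 ≤ c * μ' s / (μ s * ν s ^ d) :=
    div_nonneg (mul_nonneg hc (hμ.deriv_nonneg hs)) (mul_pos (hμ.pos hs) (hν s hs)).le
  calc ‖f s (y s + e s) - (yd s - A s (y s))‖
      ≤ ‖f s (y s + e s) - f s (y s)‖ + ‖yd s - A s (y s) - f s (y s)‖ := by
        rw [norm_sub_rev (yd s - A s (y s))]
        exact norm_sub_le_norm_sub_add_norm_sub _ _ _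
    _ ≤ c * μ' s / (μ s * ν s ^ d) * ‖e‖ + δ * μ' s / (μ s * ν s ^ d) := by
        refine add_le_add ((hfLip s hs _ _).trans ?_) (hyd s hs)
        rw [add_sub_cancel_left]
        exact mul_le_mul_of_nonneg_left (e.norm_coe_le_norm s) hweight
    _ = (c * ‖e‖ + δ) * μ' s / (μ s * ν s ^ d) := by ring

variable [CompleteSpace X]

theorem hasDerivWithinAt_add_lyapunovPerron (hT : IsEvolutionFamily A T)
    (hdich : HasMuNuDichotomy T P1 P2 μ ν D lam d) (hμ : IsGrowthRate μ μ')
    (hν : ∀ s, 0 ≤ s → 0 < ν s ^ d) (hlam : 0 < lam)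
    (hy : ∀ t, 0 ≤ t → HasDerivAt y (yd t) t) (hF : ContinuousOn F (Ici 0))
    (huK : ∀ s, 0 ≤ s → ‖F s - (yd s - A s (y s))‖ ≤ K * μ' s / (μ s * ν s ^ d)) {e : ℝ → X}
    (he : ∀ t, 0 ≤ t → e t = lyapunovPerron T P1 P2 (fun s => F s - (yd s - A s (y s))) t)
    {t : ℝ} (ht : 0 ≤ t) :
    HasDerivWithinAt (fun t => y t + e t) (A t (y t + e t) + F t) (Ici 0) t := by
  have hu := hT.aestronglyMeasurable_apply_sub_sub hy hF
  refine hT.hasDerivWithinAt_of_eq_integral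
    (v := y 0 - ∫ s in Ioi 0, T 0 s (P2 s (F s - (yd s - A s (y s))))) hF (fun τ hτ => ?_) ht
  have hint_u := hdich.integrableOn_apply hT hμ hν hlam hu huK hτ
  have hint_F : IntegrableOn (fun s => T 0 s (F s)) (Ioc 0 τ) :=
    ((hT.continuousOn_apply_right le_rfl hF).mono Icc_subset_Ici_self).integrableOn_Icc.mono_set
      Ioc_subset_Icc_self
  have hint_y : IntegrableOn (fun s => T 0 s (yd s - A s (y s))) (Ioc 0 τ) :=
    (hint_F.sub hint_u).congr_fun
      (fun s _ => by simp only [Pi.sub_apply, map_sub, sub_sub_cancel]) measurableSet_Ioc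
  have hsplit : ∫ s in Ioc 0 τ, T 0 s (F s) = (∫ s in Ioc 0 τ, T 0 s (yd s - A s (y s))) +
      ∫ s in Ioc 0 τ, T 0 s (F s - (yd s - A s (y s))) := by
    rw [← integral_add hint_y hint_u]
    exact setIntegral_congr_fun measurableSet_Ioc fun s _ => by rw [← map_add, add_sub_cancel]
  rw [he τ hτ, hdich.lyapunovPerron_eq hT hμ hν hlam hu huK hτ,
    ← hT.apply_apply_self hτ le_rfl (y τ), hT.apply_eq_add_integral hy hτ hint_y, ← map_add,
    hsplit]
  congr 1
  abel

theorem exists_eq_lyapunovPerron (hT : IsEvolutionFamily A T)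
    (hdich : HasMuNuDichotomy T P1 P2 μ ν D lam d) (hμ : IsGrowthRate μ μ')
    (hν : ∀ s, 0 ≤ s → 0 < ν s ^ d) (hlam : 0 < lam) (hD : 0 ≤ D) (hc : 0 ≤ c)
    (hκ : 2 * c * D / lam < 1)
    (hfc : ContinuousOn (fun p : ℝ × X => f p.1 p.2) (Ici 0 ×ˢ univ))
    (hfLip : ∀ t, 0 ≤ t → ∀ x y : X, ‖f t x - f t y‖ ≤ c * μ' t / (μ t * (ν t) ^ d) * ‖x - y‖)
    (hy : ∀ t, 0 ≤ t → HasDerivAt y (yd t) t) (hδ : 0 ≤ δ)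
    (hyd : ∀ t, 0 ≤ t → ‖yd t - A t (y t) - f t (y t)‖ ≤ δ * μ' t / (μ t * (ν t) ^ d)) :
    ∃ e : ℝ →ᵇ X, (∀ t, 0 ≤ t →
      e t = lyapunovPerron T P1 P2 (fun s => f s (y s + e s) - (yd s - A s (y s))) t) ∧
      ‖e‖ ≤ 2 * D * δ / lam / (1 - 2 * c * D / lam) := by
  have hycont : ContinuousOn y (Ici 0) := fun t ht => (hy t ht).continuousAt.continuousWithinAt
  have hmeas := fun e : ℝ →ᵇ X => hT.aestronglyMeasurable_apply_sub_sub hy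
    (continuousOn_apply_of_continuousOn_uncurry hfc (z := fun s => y s + e s)
      (hycont.add e.continuous.continuousOn))
  have hbound := fun (e : ℝ →ᵇ X) s (hs : 0 ≤ s) => norm_forcing_le hμ hν hc hfLip hyd e hs
  have hK : ∀ e : ℝ →ᵇ X, 0 ≤ c * ‖e‖ + δ := fun e => by positivity
  choose Φ hΦ using fun e : ℝ →ᵇ X => BoundedContinuousFunction.exists_forall_apply_eq_max
    (hdich.continuousOn_lyapunovPerron hT hμ hν hlam (hmeas e) (hbound e))
    fun t ht => hdich.norm_lyapunovPerron_le hμ hν hlam hD (hK e) (hbound e) ht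
  have hcontr : ∀ e₁ e₂, dist (Φ e₁) (Φ e₂) ≤ 2 * c * D / lam * dist e₁ e₂ := fun e₁ e₂ =>
    (BoundedContinuousFunction.dist_le (by positivity)).2 fun t => by
      rw [hΦ, hΦ, dist_eq_norm, ← hdich.lyapunovPerron_sub hT hμ hν hlam (hmeas e₁) (hbound e₁)
        (hmeas e₂) (hbound e₂) (le_max_right t 0)]
      refine (hdich.norm_lyapunovPerron_le hμ hν hlam hD (K := c * dist e₁ e₂) (by positivity)
        (fun s hs => ?_) (le_max_right t 0)).trans_eq (by ring)
      rw [sub_sub_sub_cancel_right]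
      refine (hfLip s hs _ _).trans ?_
      rw [add_sub_add_left_eq_sub, ← dist_eq_norm]
      exact (mul_le_mul_of_nonneg_left (e₁.dist_coe_le_dist s)
        (div_nonneg (mul_nonneg hc (hμ.deriv_nonneg hs))
          (mul_pos (hμ.pos hs) (hν s hs)).le)).trans_eq (by ring)
  have hΦ₀ : ‖Φ 0‖ ≤ 2 * D * δ / lam := (BoundedContinuousFunction.norm_le (by positivity)).2
    fun t => by
      simpa [hΦ] using hdich.norm_lyapunovPerron_le hμ hν hlam hD (hK 0) (hbound 0)
        (le_max_right t 0)
  obtain ⟨e, hfix, he⟩ := exists_fixedPoint_norm_le (by positivity) hκ hcontr hΦ₀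
  refine ⟨e, fun t ht => ?_, he⟩
  have := hΦ e t
  rwa [hfix, max_eq_left ht] at this

end Shadowing

theorem continuous_shadowing_no_center_general
    {X : Type*} [NormedAddCommGroup X] [NormedSpace ℝ X] [CompleteSpace X]
    (A : ℝ → X →L[ℝ] X) (T : ℝ → ℝ → X →L[ℝ] X)
    (P1 P2 : ℝ → X →L[ℝ] X)
    (μ μ' ν : ℝ → ℝ) (D lam d c : ℝ) (f : ℝ → X → X)
    (hD : 0 < D) (hlam : 0 < lam) (hc : 0 ≤ c)
    (hAc : ContinuousOn A (Set.Ici (0:ℝ)))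
    (hμmono : StrictMonoOn μ (Set.Ici (0:ℝ)))
    (hμderiv : ∀ t, 0 ≤ t → HasDerivAt μ (μ' t) t)
    (hμ0 : μ 0 = 1) (hμtop : Tendsto μ atTop atTop)
    (hν : ∀ t, 0 ≤ t → 1 ≤ ν t)
    (hTid : ∀ t, 0 ≤ t → T t t = 1)
    (hTcoc : ∀ t s r, 0 ≤ r → 0 ≤ s → 0 ≤ t → (T t s).comp (T s r) = T t r)
    (hTode : ∀ s, 0 ≤ s → ∀ v : X, ∀ t, 0 ≤ t →
      HasDerivAt (fun r => T r s v) (A t (T t s v)) t)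
    (hsum : ∀ t, 0 ≤ t → P1 t + P2 t = 1)
    (hinv : ∀ t s, 0 ≤ s → 0 ≤ t →
      (T t s).comp (P1 s) = (P1 t).comp (T t s) ∧
      (T t s).comp (P2 s) = (P2 t).comp (T t s))
    (hbS : ∀ t s, 0 ≤ s → s ≤ t →
      ‖(T t s).comp (P1 s)‖ ≤ D * (μ t / μ s) ^ (-lam) * (ν s) ^ d)
    (hbU : ∀ t s, 0 ≤ t → t ≤ s →
      ‖(T t s).comp (P2 s)‖ ≤ D * (μ s / μ t) ^ (-lam) * (ν s) ^ d)
    (hfc : ContinuousOn (fun p : ℝ × X => f p.1 p.2) (Set.Ici (0:ℝ) ×ˢ Set.univ))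
    (hfLip : ∀ t, 0 ≤ t → ∀ x y : X,
      ‖f t x - f t y‖ ≤ c * μ' t / (μ t * (ν t) ^ d) * ‖x - y‖)
    (hq : c * (2 * D + 1) + 2 * c * D / lam < 1) :
    ∃ C > 0, ∀ δ > 0, ∀ y yd : ℝ → X,
      (∀ t, 0 ≤ t → HasDerivAt y (yd t) t) →
      (∀ t, 0 ≤ t → ‖yd t - A t (y t) - f t (y t)‖ ≤ δ * μ' t / (μ t * (ν t) ^ d)) →
      ∃ x : ℝ → X,
        (∀ t, 0 ≤ t → HasDerivAt x (A t (x t) + f t (x t)) t) ∧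
        (∀ t, 0 ≤ t → ‖x t - y t‖ ≤ C * δ) := by
  have hT : IsEvolutionFamily A T := ⟨hAc, hTid, hTcoc, hTode⟩
  have hμ : IsGrowthRate μ μ' := ⟨hμmono, hμderiv, hμ0, hμtop⟩
  have hdich : HasMuNuDichotomy T P1 P2 μ ν D lam d := ⟨hsum, hinv, hbS, hbU⟩
  have hνd : ∀ s, 0 ≤ s → 0 < ν s ^ d := fun s hs =>
    Real.rpow_pos_of_pos (one_pos.trans_le (hν s hs)) d
  have hκ : 2 * c * D / lam < 1 := by
    have := mul_nonneg hc (by linarith : (0 : ℝ) ≤ 2 * D + 1)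
    linarith
  refine ⟨2 * D / lam / (1 - 2 * c * D / lam),
    div_pos (div_pos (by linarith) hlam) (sub_pos.2 hκ), fun δ hδ y yd hy hyd => ?_⟩
  obtain ⟨e, he, he_norm⟩ :=
    exists_eq_lyapunovPerron hT hdich hμ hνd hlam hD.le hc hκ hfc hfLip hy hδ.le hyd
  have hF : ContinuousOn (fun s => f s (y s + e s)) (Ici 0) :=
    continuousOn_apply_of_continuousOn_uncurry hfc (z := fun s => y s + e s) fun s hs =>
      ((hy s hs).continuousAt.add e.continuous.continuousAt).continuousWithinAt
  obtain ⟨x, hx, hx_deriv⟩ := exists_hasDerivAt_eqOn_Ici fun t ht =>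
    hasDerivWithinAt_add_lyapunovPerron hT hdich hμ hνd hlam hy hF
      (fun s hs => norm_forcing_le hμ hνd hc hfLip hyd e hs) he ht
  refine ⟨x, fun t ht => by simpa only [hx ht] using hx_deriv t ht, fun t ht => ?_⟩
  rw [hx ht, add_sub_cancel_left]
  exact (e.norm_coe_le_norm t).trans (he_norm.trans_eq (by ring))

/-- Continuous-time shadowing corollary: if `x' = A(t)x` admits a
`(μ,ν)`-dichotomy without center direction and `f` has a sufficiently small
Lipschitz constant, then every pseudosolution is shadowed by a true solution of
`x' = A(t)x + f(t,x)`. -/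
theorem continuous_shadowing_no_center
    {X : Type*} [NormedAddCommGroup X] [NormedSpace ℝ X] [CompleteSpace X]
    (A : ℝ → X →L[ℝ] X) (T : ℝ → ℝ → X →L[ℝ] X)
    (P1 P2 : ℝ → X →L[ℝ] X)
    (μ μ' ν : ℝ → ℝ) (D lam d c : ℝ) (f : ℝ → X → X)
    (hD : 0 < D) (hlam : 0 < lam) (hd : 0 ≤ d) (hc : 0 ≤ c)
    (hAc : ContinuousOn A (Set.Ici (0:ℝ)))
    (hμmono : StrictMonoOn μ (Set.Ici (0:ℝ)))
    (hμderiv : ∀ t, 0 ≤ t → HasDerivAt μ (μ' t) t)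
    (hμ0 : μ 0 = 1) (hμtop : Tendsto μ atTop atTop)
    (hν : ∀ t, 0 ≤ t → 1 ≤ ν t)
    (hTid : ∀ t, 0 ≤ t → T t t = 1)
    (hTcoc : ∀ t s r, 0 ≤ r → 0 ≤ s → 0 ≤ t → (T t s).comp (T s r) = T t r)
    (hTode : ∀ s, 0 ≤ s → ∀ v : X, ∀ t, 0 ≤ t →
      HasDerivAt (fun r => T r s v) (A t (T t s v)) t)
    (hsum : ∀ t, 0 ≤ t → P1 t + P2 t = 1)
    (hproj : ∀ t, 0 ≤ t → (P1 t).comp (P1 t) = P1 t ∧ (P2 t).comp (P2 t) = P2 t)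
    (hmut : ∀ t, 0 ≤ t → (P1 t).comp (P2 t) = 0 ∧ (P2 t).comp (P1 t) = 0)
    (hinv : ∀ t s, 0 ≤ s → 0 ≤ t →
      (T t s).comp (P1 s) = (P1 t).comp (T t s) ∧
      (T t s).comp (P2 s) = (P2 t).comp (T t s))
    (hbS : ∀ t s, 0 ≤ s → s ≤ t →
      ‖(T t s).comp (P1 s)‖ ≤ D * (μ t / μ s) ^ (-lam) * (ν s) ^ d)
    (hbU : ∀ t s, 0 ≤ t → t ≤ s →
      ‖(T t s).comp (P2 s)‖ ≤ D * (μ s / μ t) ^ (-lam) * (ν s) ^ d)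
    (hfc : ContinuousOn (fun p : ℝ × X => f p.1 p.2) (Set.Ici (0:ℝ) ×ˢ Set.univ))
    (hfLip : ∀ t, 0 ≤ t → ∀ x y : X,
      ‖f t x - f t y‖ ≤ c * μ' t / (μ t * (ν t) ^ d) * ‖x - y‖)
    (hq : c * (2 * D + 1) + 2 * c * D / lam < 1) :
    ∃ C > 0, ∀ δ > 0, ∀ y yd : ℝ → X,
      (∀ t, 0 ≤ t → HasDerivAt y (yd t) t) →
      (∀ t, 0 ≤ t → ‖yd t - A t (y t) - f t (y t)‖ ≤ δ * μ' t / (μ t * (ν t) ^ d)) →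
      ∃ x : ℝ → X,
        (∀ t, 0 ≤ t → HasDerivAt x (A t (x t) + f t (x t)) t) ∧
        (∀ t, 0 ≤ t → ‖x t - y t‖ ≤ C * δ) :=
  continuous_shadowing_no_center_general A T P1 P2 μ μ' ν D lam d c f hD hlam hc hAc hμmono hμderiv
    hμ0 hμtop hν hTid hTcoc hTode hsum hinv hbS hbU hfc hfLip hq
end
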